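/- arXiv:2401.03234 — 5 statements merged into one kernel-verified Lean document; each statement's English description precedes it below -/
import Mathlib

section
/- Let α ∈ (0,1) and τ > 0. Define c₀ := Γ(1+α) and, recursively for i ≥ 1, cᵢ := Σ_{j=0}^{i−1} ((i+1−j)^α − (i−j)^α) c_j; for k ≥ 1 set c_k^k := c₀ − Σ_{i=1}^{k−1} cᵢ and assume c_k^k ≥ 0. Let h : ℝ → ℝ be convex and continuously differentiable. Then for every k ≥ 1 and all real numbers u₀, u₁, …, u_k: (1/τ^α)·( c_k^k (h(u_k) − h(u₀)) + Σ_{i=1}^{k−1} cᵢ (h(u_k) − h(u_{k−i})) ) ≤ h'(u_k) · (1/τ^α)·( c_k^k (u_k − u₀) + Σ_{i=1}^{k−1} cᵢ (u_k − u_{k−i}) ). Equivalently, the discrete Caputo derivative satisfies the chain rule inequality (D^α_τ h(U))_k ≤ h'(U_k)(D^α_τ U)_k. -/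
private lemma convex_tangent {h h' : ℝ → ℝ} (hconv : ConvexOn ℝ Set.univ h)
    (hderiv : ∀ x : ℝ, HasDerivAt h (h' x) x) (x y : ℝ) :
    h y - h x ≤ h' y * (y - x) := by
  rcases lt_trichotomy x y with hxy | rfl | hxy
  · have := hconv.slope_le_of_hasDerivAt (Set.mem_univ x) (Set.mem_univ y) hxy (hderiv y)
    rw [slope_def_field, div_le_iff₀ (by linarith)] at this
    linarith
  · simp
  · have := hconv.le_slope_of_hasDerivAt (Set.mem_univ y) (Set.mem_univ x) hxy (hderiv y)
    rw [slope_def_field, le_div_iff₀ (by linarith)] at this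
    nlinarith

/-- Chain rule inequality for the discrete Caputo derivative: for a convex `C¹` function `h`,
`(D^α_τ h(U))_k ≤ h'(U_k) (D^α_τ U)_k`, where the discrete Caputo derivative of order
`α ∈ (0,1)` with time step `τ > 0` uses the deconvolution coefficients
`c₀ = Γ(1+α)`, `cᵢ = Σ_{j=0}^{i-1} ((i+1-j)^α - (i-j)^α) c_j` and
`c_k^k = c₀ - Σ_{i=1}^{k-1} cᵢ`. -/
theorem discrete_caputo_chain_rule_inequality
    (α τ : ℝ) (hα : α ∈ Set.Ioo (0 : ℝ) 1) (hτ : 0 < τ)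
    (c : ℕ → ℝ)
    (hc0 : c 0 = Real.Gamma (1 + α))
    (hcrec : ∀ i : ℕ, 1 ≤ i →
      c i = ∑ j ∈ Finset.range i, (((i : ℝ) + 1 - (j : ℝ)) ^ α - ((i : ℝ) - (j : ℝ)) ^ α) * c j)
    (k : ℕ) (hk : 1 ≤ k)
    (ckk : ℝ) (hckk : ckk = c 0 - ∑ i ∈ Finset.Ico 1 k, c i) (hckk0 : 0 ≤ ckk)
    (h h' : ℝ → ℝ) (hconv : ConvexOn ℝ Set.univ h)
    (hderiv : ∀ x : ℝ, HasDerivAt h (h' x) x) (hcont : Continuous h')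
    (u : ℕ → ℝ) :
    (1 / τ ^ α) * (ckk * (h (u k) - h (u 0))
        + ∑ i ∈ Finset.Ico 1 k, c i * (h (u k) - h (u (k - i))))
      ≤ h' (u k) * ((1 / τ ^ α) * (ckk * (u k - u 0)
        + ∑ i ∈ Finset.Ico 1 k, c i * (u k - u (k - i)))) := by
  -- all coefficients are nonnegative
  have hcnonneg : ∀ i : ℕ, 0 ≤ c i := by
    intro i
    induction i using Nat.strong_induction_on with
    | _ i ih =>
      rcases Nat.eq_zero_or_pos i with rfl | hi
      · rw [hc0]
        exact (Real.Gamma_pos_of_pos (by linarith [hα.1])).le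
      · rw [hcrec i hi]
        refine Finset.sum_nonneg fun j hj => mul_nonneg ?_ (ih j (Finset.mem_range.mp hj))
        have hji : (j : ℝ) ≤ (i : ℝ) := by exact_mod_cast (Finset.mem_range.mp hj).le
        have h1 : (0:ℝ) ≤ (i : ℝ) - j := by linarith
        have := Real.rpow_le_rpow h1 (by linarith : (i:ℝ) - j ≤ (i:ℝ) + 1 - j) hα.1.le
        linarith
  have htpos : 0 < 1 / τ ^ α := by positivity
  rw [mul_comm (h' (u k)), mul_assoc]
  apply mul_le_mul_of_nonneg_left _ htpos.le
  have key : ∀ i : ℕ, c i * (h (u k) - h (u (k - i)))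
      ≤ c i * ((u k - u (k - i)) * h' (u k)) := fun i =>
    mul_le_mul_of_nonneg_left (by
      have := convex_tangent hconv hderiv (u (k - i)) (u k); linarith) (hcnonneg i)
  have hkey0 : ckk * (h (u k) - h (u 0)) ≤ ckk * ((u k - u 0) * h' (u k)) :=
    mul_le_mul_of_nonneg_left (by
      have := convex_tangent hconv hderiv (u 0) (u k); linarith) hckk0
  calc ckk * (h (u k) - h (u 0)) + ∑ i ∈ Finset.Ico 1 k, c i * (h (u k) - h (u (k - i)))
      ≤ ckk * ((u k - u 0) * h' (u k))
        + ∑ i ∈ Finset.Ico 1 k, c i * ((u k - u (k - i)) * h' (u k)) :=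
        add_le_add hkey0 (Finset.sum_le_sum fun i _ => key i)
    _ = (ckk * (u k - u 0) + ∑ i ∈ Finset.Ico 1 k, c i * (u k - u (k - i))) * h' (u k) := by
        rw [add_mul, Finset.sum_mul]
        exact congrArg₂ (· + ·) (by ring) (Finset.sum_congr rfl fun i _ => by ring)
end

section
/- Let α ∈ (0,1). Define c₀ := Γ(1+α) and, recursively for i ≥ 1, cᵢ := Σ_{j=0}^{i−1} ((i+1−j)^α − (i−j)^α) c_j. Let (X_k)_{k≥0} be a sequence of real numbers such that for every k ≥ 1: c₀ (X_k − X₀) − Σ_{i=1}^{k−1} cᵢ (X_{k−i} − X₀) ≤ 0 (i.e., the discrete Caputo derivative of (X_k) is nonpositive at every step). Then X_k ≤ X₀ for every k ≥ 1. -/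
/-- If a real sequence has nonpositive discrete Caputo derivative at every step (written in the
deconvolution form `c₀(X_k - X₀) - Σ_{i=1}^{k-1} cᵢ (X_{k-i} - X₀) ≤ 0`, where
`c₀ = Γ(1+α)` and `cᵢ = Σ_{j=0}^{i-1} ((i+1-j)^α - (i-j)^α) c_j`), then `X_k ≤ X₀`
for every `k ≥ 1`. -/
theorem discrete_caputo_nonpositive_implies_below_initial
    (α : ℝ) (hα : α ∈ Set.Ioo (0 : ℝ) 1)
    (c : ℕ → ℝ)
    (hc0 : c 0 = Real.Gamma (1 + α))
    (hcrec : ∀ i : ℕ, 1 ≤ i →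
      c i = ∑ j ∈ Finset.range i, (((i : ℝ) + 1 - (j : ℝ)) ^ α - ((i : ℝ) - (j : ℝ)) ^ α) * c j)
    (X : ℕ → ℝ)
    (hX : ∀ k : ℕ, 1 ≤ k →
      c 0 * (X k - X 0) - ∑ i ∈ Finset.Ico 1 k, c i * (X (k - i) - X 0) ≤ 0) :
    ∀ k : ℕ, 1 ≤ k → X k ≤ X 0 := by
  obtain ⟨hα0, hα1⟩ := hα
  have hcpos : ∀ i : ℕ, 0 < c i := by
    intro i
    induction i using Nat.strong_induction_on with
    | _ i ih =>
      rcases Nat.eq_zero_or_pos i with h0 | h1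
      · rw [h0, hc0]
        exact Real.Gamma_pos_of_pos (by linarith)
      · rw [hcrec i h1]
        apply Finset.sum_pos
        · intro j hj
          have hj' : (j : ℝ) < (i : ℝ) := by
            exact_mod_cast Finset.mem_range.mp hj
          have h1' : (0:ℝ) < (i : ℝ) - (j : ℝ) := by linarith
          have h2 : ((i : ℝ) - (j : ℝ)) ^ α < ((i : ℝ) + 1 - (j : ℝ)) ^ α :=
            Real.rpow_lt_rpow h1'.le (by linarith) hα0
          exact mul_pos (by linarith) (ih j (Finset.mem_range.mp hj))
        · exact ⟨0, Finset.mem_range.mpr h1⟩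
  intro k
  induction k using Nat.strong_induction_on with
  | _ k ih =>
    intro hk
    have hsum : ∑ i ∈ Finset.Ico 1 k, c i * (X (k - i) - X 0) ≤ 0 := by
      apply Finset.sum_nonpos
      intro i hi
      obtain ⟨hi1, hik⟩ := Finset.mem_Ico.mp hi
      have h1 : 1 ≤ k - i := by omega
      have h2 : k - i < k := by omega
      have := ih (k - i) h2 h1
      exact mul_nonpos_of_nonneg_of_nonpos (hcpos i).le (by linarith)
    have := hX k hk
    nlinarith [hcpos 0]
end

section
/- Let α ∈ (0,1), m > 1 and t > 0. Let f : (0,2t] → [0,∞) be measurable and suppose that f(τ) ≥ (t/τ)^{α/(m−1)} f(t) for all τ ∈ (t,2t) (which holds whenever s ↦ s^{α/(m−1)} f(s) is nondecreasing on (0,2t]). Then ∫₀^{2t} f(τ)^m (2t−τ)^{α−1} dτ ≥ (1/(α·2^{αm/(m−1)})) · t^α · f(t)^m. -/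
open MeasureTheory

/-- Fundamental lower bound in the porous medium range `m > 1`: if a nonnegative function
`f` on `(0,2t]` satisfies `f(τ) ≥ (t/τ)^{α/(m-1)} f(t)` for `τ ∈ (t,2t)`, then
`∫₀^{2t} f(τ)^m (2t-τ)^{α-1} dτ ≥ (α 2^{αm/(m-1)})⁻¹ t^α f(t)^m`. -/
theorem fractional_time_monotonicity_lower_bound_slow
    (α m t : ℝ) (hα : α ∈ Set.Ioo (0 : ℝ) 1) (hm : 1 < m) (ht : 0 < t)
    (f : ℝ → ℝ) (hmeas : Measurable f)
    (hnn : ∀ τ ∈ Set.Ioc (0 : ℝ) (2 * t), 0 ≤ f τ)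
    (hlow : ∀ τ ∈ Set.Ioo t (2 * t), (t / τ) ^ (α / (m - 1)) * f t ≤ f τ) :
    ENNReal.ofReal ((1 / (α * 2 ^ (α * m / (m - 1)))) * (t ^ α * f t ^ m))
      ≤ ∫⁻ τ in Set.Ioo (0 : ℝ) (2 * t),
          ENNReal.ofReal (f τ ^ m * (2 * t - τ) ^ (α - 1)) := by
  obtain ⟨hα0, hα1⟩ := hα
  have hm1 : (0:ℝ) < m - 1 := by linarith
  have hft : 0 ≤ f t := hnn t ⟨ht, by linarith⟩
  -- constant c = 2^{-αm/(m-1)} f(t)^m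
  set c : ℝ := (2 ^ (α * m / (m - 1)))⁻¹ * f t ^ m with hc
  have hc0 : 0 ≤ c := by
    apply mul_nonneg (inv_nonneg.2 (Real.rpow_nonneg (by norm_num) _))
    exact Real.rpow_nonneg hft _
  -- pointwise bound on (t, 2t)
  have hpt : ∀ τ ∈ Set.Ioo t (2 * t),
      c * (2 * t - τ) ^ (α - 1) ≤ f τ ^ m * (2 * t - τ) ^ (α - 1) := by
    intro τ hτ
    have hτ0 : 0 < τ := lt_trans ht hτ.1
    have hw : 0 ≤ (2 * t - τ) ^ (α - 1) :=
      Real.rpow_nonneg (by linarith [hτ.2]) _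
    refine mul_le_mul_of_nonneg_right ?_ hw
    have h12 : (1/2 : ℝ) ≤ t / τ := by
      rw [div_le_div_iff₀ (by norm_num) hτ0]
      linarith [hτ.2]
    have hβ : (1/2 : ℝ) ^ (α / (m - 1)) ≤ (t / τ) ^ (α / (m - 1)) :=
      Real.rpow_le_rpow (by norm_num) h12 (le_of_lt (div_pos hα0 hm1))
    have h1 : (1/2 : ℝ) ^ (α / (m - 1)) * f t ≤ f τ :=
      le_trans (mul_le_mul_of_nonneg_right hβ hft) (hlow τ hτ)
    have h2 : ((1/2 : ℝ) ^ (α / (m - 1)) * f t) ^ m ≤ f τ ^ m :=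
      Real.rpow_le_rpow
        (mul_nonneg (Real.rpow_nonneg (by norm_num) _) hft) h1 (by linarith)
    calc c = ((1/2 : ℝ) ^ (α / (m - 1)) * f t) ^ m := by
              rw [Real.mul_rpow (Real.rpow_nonneg (by norm_num) _) hft,
                ← Real.rpow_mul (by norm_num : (0:ℝ) ≤ 1/2),
                show α / (m - 1) * m = α * m / (m - 1) by ring, hc,
                one_div, Real.inv_rpow (by norm_num : (0:ℝ) ≤ 2)]
      _ ≤ f τ ^ m := h2
  -- the weight integral on (t,2t)
  have hii : IntervalIntegrable (fun τ => (2 * t - τ) ^ (α - 1)) volume t (2 * t) := by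
    have := (intervalIntegral.intervalIntegrable_rpow'
      (show (-1:ℝ) < α - 1 by linarith) (a := 0) (b := t)).comp_sub_left (2 * t)
    simp only [sub_zero] at this
    rw [show 2 * t - t = t by ring] at this
    exact this.symm
  have hval : ∫ τ in t..(2*t), (2 * t - τ) ^ (α - 1) = t ^ α / α := by
    rw [intervalIntegral.integral_comp_sub_left (fun x => x ^ (α - 1)) (2 * t)]
    have h0 : 2 * t - 2 * t = 0 := by ring
    have h1 : 2 * t - t = t := by ring
    rw [h0, h1, integral_rpow (Or.inl (by linarith))]
    rw [Real.zero_rpow (by linarith), sub_add_cancel]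
    simp
  have hIoc : ∫⁻ τ in Set.Ioc t (2*t), ENNReal.ofReal ((2 * t - τ) ^ (α - 1))
      = ENNReal.ofReal (t ^ α / α) := by
    rw [← hval, intervalIntegral.integral_of_le (by linarith),
      ← ofReal_integral_eq_lintegral_ofReal]
    · exact (intervalIntegrable_iff_integrableOn_Ioc_of_le (by linarith)).1 hii
    · filter_upwards [ae_restrict_mem measurableSet_Ioc] with τ hτ
      exact Real.rpow_nonneg (by linarith [hτ.1, hτ.2]) _
  have hwmeas : Measurable fun τ : ℝ => ENNReal.ofReal ((2 * t - τ) ^ (α - 1)) := by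
    fun_prop
  have hIoo : ∫⁻ τ in Set.Ioo t (2*t), ENNReal.ofReal ((2 * t - τ) ^ (α - 1))
      = ENNReal.ofReal (t ^ α / α) := by
    rw [← hIoc]
    exact setLIntegral_congr Ioo_ae_eq_Ioc
  calc ENNReal.ofReal ((1 / (α * 2 ^ (α * m / (m - 1)))) * (t ^ α * f t ^ m))
      = ENNReal.ofReal (c * (t ^ α / α)) := by
        congr 1
        rw [hc]
        field_simp
    _ = ENNReal.ofReal c * ENNReal.ofReal (t ^ α / α) := ENNReal.ofReal_mul hc0
    _ = ENNReal.ofReal c *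
          ∫⁻ τ in Set.Ioo t (2*t), ENNReal.ofReal ((2 * t - τ) ^ (α - 1)) := by rw [hIoo]
    _ = ∫⁻ τ in Set.Ioo t (2*t),
          ENNReal.ofReal c * ENNReal.ofReal ((2 * t - τ) ^ (α - 1)) :=
        (lintegral_const_mul _ hwmeas).symm
    _ ≤ ∫⁻ τ in Set.Ioo t (2*t), ENNReal.ofReal (f τ ^ m * (2 * t - τ) ^ (α - 1)) := by
        refine lintegral_mono_ae ?_
        filter_upwards [ae_restrict_mem measurableSet_Ioo] with τ hτ
        rw [← ENNReal.ofReal_mul hc0]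
        exact ENNReal.ofReal_le_ofReal (hpt τ hτ)
    _ ≤ ∫⁻ τ in Set.Ioo 0 (2*t), ENNReal.ofReal (f τ ^ m * (2 * t - τ) ^ (α - 1)) :=
        lintegral_mono_set (Set.Ioo_subset_Ioo_left (le_of_lt ht))
end

section
/- (Fundamental identity for fractional derivatives with regular kernels.) Let T > 0 and let I ⊆ ℝ be an open set. Let k̃ : [0,T] → ℝ satisfy k̃(t) = k̃(0) + ∫₀ᵗ k̃'(s) ds for some k̃' ∈ L¹((0,T)) (i.e. k̃ ∈ W^{1,1}([0,T])), let h : I → ℝ be continuously differentiable, and let u ∈ L¹((0,T)) with u(t) ∈ I for a.e. t ∈ (0,T). Suppose that the functions h∘u, (h'∘u)·u and (h'∘u)·(k̃'*u) belong to L¹((0,T)). Then for a.e. t ∈ (0,T) there exist real numbers D₁, D₂ such that the function k̃*u is differentiable at t with derivative D₁, the function k̃*(h∘u) is differentiable at t with derivative D₂, and h'(u(t))·D₁ = D₂ + ( h'(u(t)) u(t) − h(u(t)) )·k̃(t) + ∫₀ᵗ ( h(u(t−τ)) − h(u(t)) − h'(u(t))·(u(t−τ) − u(t)) )·(−k̃'(τ))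 dτ. -/
/-!
Extend `k̃'` and `v` by zero outside `(0,T)` to `k₀, v₀ ∈ L¹(ℝ)`. Writing
`k̃(s - τ) = k̃(0) + ∫₀^{s-τ} k₀` and applying Fubini gives, for `0 ≤ s < T`,
`(k̃ * v)(s) = ∫₀ˢ (k̃(0) v₀ + v₀ ⋆ k₀)` with `⋆` the convolution on `ℝ`, whose integrand lies in
`L¹(ℝ)`. By the Lebesgue differentiation theorem `k̃ * v` is then differentiable at a.e.
`t ∈ (0,T)` with derivative `k̃(0) v(t) + (k̃' * v)(t)`. For `v = u` and `v = h ∘ u` this turns the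
identity into a linear computation using `k̃(t) = k̃(0) + ∫₀ᵗ k̃'`.
-/

open MeasureTheory

namespace MeasureTheory

open Set Filter Topology ContinuousLinearMap
open scoped Convolution

section SetIntegralConvolution

variable {𝕜 G E E' F : Type*} [RCLike 𝕜]
  [NormedAddCommGroup E] [NormedSpace 𝕜 E] [NormedAddCommGroup E'] [NormedSpace 𝕜 E']
  [NormedAddCommGroup F] [NormedSpace 𝕜 F]
  [MeasurableSpace G] [AddGroup G] [MeasurableAdd₂ G] [MeasurableNeg G]
  {μ ν : Measure G} [SFinite μ] [SFinite ν] [μ.IsAddRightInvariant]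
  {f : G → E} {g : G → E'} (L : E →L[𝕜] E' →L[𝕜] F)

theorem Integrable.integrable_restrict_convolution_integrand (hf : Integrable f ν)
    (hg : Integrable g μ) (s : Set G) :
    Integrable (fun p : G × G => L (f p.2) (g (p.1 - p.2))) ((μ.restrict s).prod ν) :=
  (hf.convolution_integrand L hg).mono_measure (Measure.prod_mono Measure.restrict_le_self le_rfl)

variable [NormedSpace ℝ E'] [CompleteSpace E'] [NormedSpace ℝ F] [CompleteSpace F]

theorem Integrable.integrable_apply_setIntegral_comp_sub (hf : Integrable f ν)
    (hg : Integrable g μ) (s : Set G) :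
    Integrable (fun t => L (f t) (∫ x in s, g (x - t) ∂μ)) ν :=
  (hf.integrable_restrict_convolution_integrand L hg s).integral_prod_right.congr
    (Eventually.of_forall fun t => (L (f t)).integral_comp_comm (hg.comp_sub_right t).integrableOn)

theorem setIntegral_convolution (hf : Integrable f ν) (hg : Integrable g μ) (s : Set G) :
    ∫ x in s, (f ⋆[L, ν] g) x ∂μ = ∫ t, L (f t) (∫ x in s, g (x - t) ∂μ) ∂ν :=
  (integral_integral_swap (hf.integrable_restrict_convolution_integrand L hg s)).trans <|
    integral_congr_ae (Eventually.of_forall fun t =>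
      (L (f t)).integral_comp_comm (hg.comp_sub_right t).integrableOn)

end SetIntegralConvolution

section TruncatedConvolution

variable {T : ℝ}

theorem intervalIntegral_indicator_Ioo_of_nonpos {E : Type*} [NormedAddCommGroup E]
    [NormedSpace ℝ E] {x : ℝ} (hx : x ≤ 0) (f : ℝ → E) :
    ∫ r in (0:ℝ)..x, (Ioo 0 T).indicator f r = 0 := by
  have hzero : EqOn ((Ioo 0 T).indicator f) 0 (uIcc 0 x) := fun r hr =>
    indicator_of_notMem (fun h => by
      rw [uIcc_of_ge hx] at hr
      linarith [h.1, hr.2]) f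
  rw [intervalIntegral.integral_congr hzero, Pi.zero_def, intervalIntegral.integral_zero]

theorem intervalIntegral_indicator_Ioo_of_le {E : Type*} [NormedAddCommGroup E]
    [NormedSpace ℝ E] {x : ℝ} (hx0 : 0 ≤ x) (hxT : x ≤ T) (f : ℝ → E) :
    ∫ r in (0:ℝ)..x, (Ioo 0 T).indicator f r = ∫ r in (0:ℝ)..x, f r := by
  simp only [intervalIntegral.integral_of_le hx0, integral_Ioc_eq_integral_Ioo]
  exact setIntegral_congr_fun measurableSet_Ioo fun r hr =>
    indicator_of_mem (show r ∈ Ioo 0 T from ⟨hr.1, hr.2.trans_le hxT⟩) f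

theorem indicator_Ioo_mul_indicator_Ioo_comp_sub {t : ℝ} (ht : t ≤ T) (f g : ℝ → ℝ) :
    (fun τ => (Ioo 0 T).indicator g τ * (Ioo 0 T).indicator f (t - τ)) =
      (Ioo 0 t).indicator (fun τ => g τ * f (t - τ)) := by
  ext τ
  by_cases hτ : τ ∈ Ioo 0 t
  · have hgτ : τ ∈ Ioo 0 T := ⟨hτ.1, hτ.2.trans_le ht⟩
    have hfτ : t - τ ∈ Ioo 0 T := ⟨by linarith [hτ.2], by linarith [hτ.1]⟩
    rw [indicator_of_mem hτ, indicator_of_mem hgτ, indicator_of_mem hfτ]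
  · rw [indicator_of_notMem hτ]
    rcases le_or_gt τ 0 with hτ0 | hτ0
    · rw [indicator_of_notMem (fun h => by linarith [h.1]), zero_mul]
    · have htτ : t ≤ τ := not_lt.1 fun h => hτ ⟨hτ0, h⟩
      rw [indicator_of_notMem (fun h => by linarith [h.1]) f, mul_zero]

theorem convolution_indicator_Ioo {t : ℝ} (ht0 : 0 ≤ t) (htT : t ≤ T) (f g : ℝ → ℝ) :
    ((Ioo 0 T).indicator g ⋆[mul ℝ ℝ] (Ioo 0 T).indicator f) t =
      ∫ τ in (0:ℝ)..t, g τ * f (t - τ) := by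
  rw [convolution_mul, indicator_Ioo_mul_indicator_Ioo_comp_sub htT,
    integral_indicator measurableSet_Ioo, intervalIntegral.integral_of_le ht0,
    integral_Ioc_eq_integral_Ioo]

theorem ConvolutionExistsAt.intervalIntegrable_of_indicator_Ioo {t : ℝ} {f g : ℝ → ℝ}
    (ht0 : 0 ≤ t) (htT : t ≤ T)
    (h : ConvolutionExistsAt ((Ioo 0 T).indicator g) ((Ioo 0 T).indicator f) t (mul ℝ ℝ)) :
    IntervalIntegrable (fun τ => g τ * f (t - τ)) volume 0 t := by
  have h' : Integrable ((Ioo 0 t).indicator fun τ => g τ * f (t - τ)) := by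
    rw [← indicator_Ioo_mul_indicator_Ioo_comp_sub htT]
    exact h
  exact (intervalIntegrable_iff_integrableOn_Ioo_of_le ht0).2
    ((integrable_indicator_iff measurableSet_Ioo).1 h')

end TruncatedConvolution

theorem intervalIntegral_comp_sub_mul_eq_intervalIntegral_convolution {T s : ℝ}
    {ktil k' v : ℝ → ℝ} (hk' : IntegrableOn k' (Ioo 0 T))
    (hkAC : ∀ t ∈ Icc (0:ℝ) T, ktil t = ktil 0 + ∫ r in (0:ℝ)..t, k' r)
    (hv : IntegrableOn v (Ioo 0 T)) (hs0 : 0 ≤ s) (hsT : s < T) :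
    ∫ τ in (0:ℝ)..s, ktil (s - τ) * v τ =
      ∫ σ in (0:ℝ)..s, (ktil 0 * (Ioo 0 T).indicator v σ +
        ((Ioo 0 T).indicator v ⋆[mul ℝ ℝ] (Ioo 0 T).indicator k') σ) := by
  set k0 := (Ioo 0 T).indicator k'
  set v0 := (Ioo 0 T).indicator v
  have hk0 : Integrable k0 := (integrable_indicator_iff measurableSet_Ioo).2 hk'
  have hv0 : Integrable v0 := (integrable_indicator_iff measurableSet_Ioo).2 hv
  set K := fun x => ∫ r in (0:ℝ)..x, k0 r
  have hinner : ∀ τ, ∫ σ in Ioc 0 s, k0 (σ - τ) = K (s - τ) - K (-τ) := fun τ => by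
    rw [← intervalIntegral.integral_of_le hs0, intervalIntegral.integral_comp_sub_right, zero_sub,
      intervalIntegral.integral_interval_sub_left hk0.intervalIntegrable hk0.intervalIntegrable]
  have hremainder : (fun τ => v0 τ * (K (s - τ) - K (-τ))) =
      (Ioc 0 s).indicator (fun τ => ktil (s - τ) * v τ - ktil 0 * v0 τ) := by
    have hK_nonpos : ∀ x ≤ 0, K x = 0 := fun x hx => intervalIntegral_indicator_Ioo_of_nonpos hx k'
    ext τ
    by_cases hτ : τ ∈ Ioc 0 s
    · have hτT : τ ∈ Ioo 0 T := ⟨hτ.1, hτ.2.trans_lt hsT⟩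
      have hsτ : s - τ ∈ Icc 0 T := ⟨by linarith [hτ.2], by linarith [hτ.1]⟩
      have hv0τ : v0 τ = v τ := indicator_of_mem hτT v
      have hKsτ : K (s - τ) = ktil (s - τ) - ktil 0 := by
        rw [hkAC _ hsτ, add_sub_cancel_left]
        exact intervalIntegral_indicator_Ioo_of_le hsτ.1 hsτ.2 k'
      rw [indicator_of_mem hτ, hv0τ, hKsτ, hK_nonpos _ (by linarith [hτ.1])]
      ring
    · rw [indicator_of_notMem hτ]
      rcases le_or_gt τ 0 with hτ0 | hτ0
      · have hv0τ : v0 τ = 0 := indicator_of_notMem (fun h : τ ∈ Ioo 0 T => by linarith [h.1]) v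
        rw [hv0τ, zero_mul]
      · have hsτ : s < τ := not_le.1 fun h => hτ ⟨hτ0, h⟩
        rw [hK_nonpos _ (by linarith), hK_nonpos _ (by linarith), sub_zero, mul_zero]
  have hremainder_int :
      IntervalIntegrable (fun τ => ktil (s - τ) * v τ - ktil 0 * v0 τ) volume 0 s := by
    rw [intervalIntegrable_iff_integrableOn_Ioc_of_le hs0,
      ← integrable_indicator_iff measurableSet_Ioc, ← hremainder]
    simpa only [hinner, mul_apply'] using
      hv0.integrable_apply_setIntegral_comp_sub (mul ℝ ℝ) hk0 (Ioc 0 s)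
  have hconv : ∫ σ in (0:ℝ)..s, (v0 ⋆[mul ℝ ℝ] k0) σ =
      ∫ τ in (0:ℝ)..s, (ktil (s - τ) * v τ - ktil 0 * v0 τ) := by
    rw [intervalIntegral.integral_of_le hs0, intervalIntegral.integral_of_le hs0,
      setIntegral_convolution _ hv0 hk0, ← integral_indicator measurableSet_Ioc, ← hremainder]
    simp only [hinner, mul_apply']
  rw [intervalIntegral.integral_add (hv0.const_mul _).intervalIntegrable
      (hv0.integrable_convolution _ hk0).intervalIntegrable, hconv,
    ← intervalIntegral.integral_add (hv0.const_mul _).intervalIntegrable hremainder_int]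
  simp only [add_sub_cancel]

theorem ae_hasDerivAt_intervalIntegral_comp_sub_mul {T : ℝ} {ktil k' v : ℝ → ℝ}
    (hk' : IntegrableOn k' (Ioo 0 T))
    (hkAC : ∀ t ∈ Icc (0:ℝ) T, ktil t = ktil 0 + ∫ r in (0:ℝ)..t, k' r)
    (hv : IntegrableOn v (Ioo 0 T)) :
    ∀ᵐ t ∂(volume.restrict (Ioo 0 T)),
      HasDerivAt (fun s => ∫ τ in (0:ℝ)..s, ktil (s - τ) * v τ)
        (ktil 0 * v t + ∫ τ in (0:ℝ)..t, k' τ * v (t - τ)) t ∧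
      IntervalIntegrable (fun τ => k' τ * v (t - τ)) volume 0 t := by
  set k0 := (Ioo 0 T).indicator k'
  set v0 := (Ioo 0 T).indicator v
  have hk0 : Integrable k0 := (integrable_indicator_iff measurableSet_Ioo).2 hk'
  have hv0 : Integrable v0 := (integrable_indicator_iff measurableSet_Ioo).2 hv
  have hF : Integrable (fun σ => ktil 0 * v0 σ + (v0 ⋆[mul ℝ ℝ] k0) σ) :=
    (hv0.const_mul _).add (hv0.integrable_convolution _ hk0)
  filter_upwards [ae_restrict_mem measurableSet_Ioo,
    ae_restrict_of_ae (LocallyIntegrable.ae_hasDerivAt_integral hF.locallyIntegrable),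
    ae_restrict_of_ae (hk0.ae_convolution_exists (mul ℝ ℝ) hv0)] with t ht hderiv hconv
  have hconv_eq : (v0 ⋆[mul ℝ ℝ] k0) t = ∫ τ in (0:ℝ)..t, k' τ * v (t - τ) := by
    rw [convolution_mul_swap, ← convolution_indicator_Ioo ht.1.le ht.2.le, convolution_mul]
    exact integral_congr_ae (Eventually.of_forall fun τ => mul_comm _ _)
  refine ⟨?_, hconv.intervalIntegrable_of_indicator_Ioo ht.1.le ht.2.le⟩
  have hrepr : (fun s => ∫ τ in (0:ℝ)..s, ktil (s - τ) * v τ) =ᶠ[𝓝 t]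
      fun s => ∫ σ in (0:ℝ)..s, (ktil 0 * v0 σ + (v0 ⋆[mul ℝ ℝ] k0) σ) := by
    filter_upwards [Ioo_mem_nhds ht.1 ht.2] with s hs
    exact intervalIntegral_comp_sub_mul_eq_intervalIntegral_convolution hk' hkAC hv hs.1.le hs.2
  have hv0t : v0 t = v t := indicator_of_mem ht v
  simpa only [hv0t, hconv_eq] using (hderiv 0).congr_of_eventuallyEq hrepr

theorem intervalIntegral_sub_sub_mul_sub_mul_neg {a b c d x : ℝ} {k p q : ℝ → ℝ}
    (hk : IntervalIntegrable k volume a b)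
    (hp : IntervalIntegrable (fun τ => k τ * p τ) volume a b)
    (hq : IntervalIntegrable (fun τ => k τ * q τ) volume a b) :
    ∫ τ in a..b, (q τ - c - d * (p τ - x)) * (-k τ) =
      -(∫ τ in a..b, k τ * q τ) + (c - d * x) * (∫ τ in a..b, k τ) +
        d * ∫ τ in a..b, k τ * p τ := by
  have hsplit : (fun τ => (q τ - c - d * (p τ - x)) * (-k τ)) =
      fun τ => -(k τ * q τ) + (c - d * x) * k τ + d * (k τ * p τ) := by
    ext τ; ring
  rw [hsplit, intervalIntegral.integral_add, intervalIntegral.integral_add,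
    intervalIntegral.integral_neg, intervalIntegral.integral_const_mul,
    intervalIntegral.integral_const_mul]
  exacts [hq.neg, hk.const_mul _, hq.neg.add (hk.const_mul _), hp.const_mul _]

end MeasureTheory

theorem fundamental_identity_regular_kernel_general
    (T : ℝ)
    (ktil k' : ℝ → ℝ)
    (hk'int : IntegrableOn k' (Set.Ioo 0 T))
    (hkAC : ∀ t ∈ Set.Icc (0:ℝ) T, ktil t = ktil 0 + ∫ s in (0:ℝ)..t, k' s)
    (h h' : ℝ → ℝ)
    (u : ℝ → ℝ) (hu : IntegrableOn u (Set.Ioo 0 T))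
    (hint1 : IntegrableOn (fun t => h (u t)) (Set.Ioo 0 T)) :
    ∀ᵐ t ∂(volume.restrict (Set.Ioo 0 T)), ∃ D₁ D₂ : ℝ,
      HasDerivAt (fun s => ∫ τ in (0:ℝ)..s, ktil (s - τ) * u τ) D₁ t ∧
      HasDerivAt (fun s => ∫ τ in (0:ℝ)..s, ktil (s - τ) * h (u τ)) D₂ t ∧
      h' (u t) * D₁ = D₂ + (h' (u t) * u t - h (u t)) * ktil t
        + ∫ τ in (0:ℝ)..t,
            (h (u (t - τ)) - h (u t) - h' (u t) * (u (t - τ) - u t)) * (-k' τ) := by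
  filter_upwards [ae_restrict_mem measurableSet_Ioo,
    ae_hasDerivAt_intervalIntegral_comp_sub_mul hk'int hkAC hu,
    ae_hasDerivAt_intervalIntegral_comp_sub_mul hk'int hkAC hint1]
    with t ht ⟨hderiv_u, hint_u⟩ ⟨hderiv_hu, hint_hu⟩
  refine ⟨_, _, hderiv_u, hderiv_hu, ?_⟩
  have hk't : IntervalIntegrable k' volume 0 t :=
    (intervalIntegrable_iff_integrableOn_Ioo_of_le ht.1.le).2
      (hk'int.mono_set (Set.Ioo_subset_Ioo_right ht.2.le))
  rw [intervalIntegral_sub_sub_mul_sub_mul_neg hk't hint_u hint_hu,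
    hkAC t (Set.Ioo_subset_Icc_self ht)]
  ring

/-- Fundamental identity for fractional derivatives with regular kernels
(Vergara--Zacher, Lemma 2.2): for `k̃ ∈ W^{1,1}([0,T])`, `h ∈ C¹(I)` and `u ∈ L¹((0,T))`
with values in `I`, assuming the integrability of `h(u)`, `h'(u)u` and `h'(u)(k̃'*u)`,
for a.e. `t ∈ (0,T)` both `k̃*u` and `k̃*h(u)` are differentiable at `t` and
`h'(u(t)) d/dt(k̃*u)(t) = d/dt(k̃*h(u))(t) + (h'(u(t))u(t) - h(u(t))) k̃(t)
+ ∫₀ᵗ (h(u(t-τ)) - h(u(t)) - h'(u(t))(u(t-τ)-u(t))) (-k̃'(τ)) dτ`. -/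
theorem fundamental_identity_regular_kernel
    (T : ℝ) (hT : 0 < T) (I : Set ℝ) (hI : IsOpen I)
    (ktil k' : ℝ → ℝ)
    (hk'int : IntegrableOn k' (Set.Ioo 0 T))
    (hkAC : ∀ t ∈ Set.Icc (0:ℝ) T, ktil t = ktil 0 + ∫ s in (0:ℝ)..t, k' s)
    (h h' : ℝ → ℝ)
    (hderiv : ∀ x ∈ I, HasDerivAt h (h' x) x) (hcont : ContinuousOn h' I)
    (u : ℝ → ℝ) (hu : IntegrableOn u (Set.Ioo 0 T))
    (huI : ∀ᵐ t ∂(volume.restrict (Set.Ioo 0 T)), u t ∈ I)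
    (hint1 : IntegrableOn (fun t => h (u t)) (Set.Ioo 0 T))
    (hint2 : IntegrableOn (fun t => h' (u t) * u t) (Set.Ioo 0 T))
    (hint3 : IntegrableOn
      (fun t => h' (u t) * ∫ τ in (0:ℝ)..t, k' (t - τ) * u τ) (Set.Ioo 0 T)) :
    ∀ᵐ t ∂(volume.restrict (Set.Ioo 0 T)), ∃ D₁ D₂ : ℝ,
      HasDerivAt (fun s => ∫ τ in (0:ℝ)..s, ktil (s - τ) * u τ) D₁ t ∧
      HasDerivAt (fun s => ∫ τ in (0:ℝ)..s, ktil (s - τ) * h (u τ)) D₂ t ∧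
      h' (u t) * D₁ = D₂ + (h' (u t) * u t - h (u t)) * ktil t
        + ∫ τ in (0:ℝ)..t,
            (h (u (t - τ)) - h (u t) - h' (u t) * (u (t - τ) - u t)) * (-k' τ) :=
  fundamental_identity_regular_kernel_general T ktil k' hk'int hkAC h h' u hu hint1
end

section
/- (Chain rule inequality for Caputo-type derivatives with H¹ kernels.) Let T > 0 and let k̃ : [0,T] → ℝ be nonnegative, nonincreasing and absolutely continuous with k̃(t) = k̃(0) + ∫₀ᵗ k̃'(s) ds for some k̃' ∈ L²((0,T)) (i.e. k̃ ∈ H¹([0,T])). Let h : ℝ → ℝ be convex and continuously differentiable, let f ∈ L^∞((0,T)), and let f₀ ∈ ℝ. Then for a.e. t ∈ (0,T) there exist real numbers D₁, D₂ such that the function k̃*(f − f₀) is differentiable at t with derivative D₁, the function k̃*(h∘f − h(f₀)) is differentiable at t with derivative D₂, and D₂ ≤ h'(f(t))·D₁. In the notation of generalized fractional derivatives: ∂_t[k̃*(h(f) − h(f₀))](t) ≤ h'(f(t))·∂_t[k̃*(f − f₀)](t) for a.e. t ∈ (0,T). -/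
/-!
Write `k̃ v = k̃ 0 + ∫₀ᵛ k̃'`. Fubini on the triangle `0 < τ < s ≤ u` gives
`(k̃ * g)(u) = ∫₀ᵘ (k̃(0) g(s) + (k̃' * g)(s)) ds` for every `g ∈ L¹(0,T)`, so by Lebesgue's
differentiation theorem `∂ₜ(k̃ * g)(t) = k̃(0) g(t) + (k̃' * g)(t)` for a.e. `t`.
Put `a = f t` and `α = h' a`. By convexity the tangent-line gaps
`A = α (a - f₀) - (h a - h f₀)` and `B τ = h (f τ) - h a - α (f τ - a)` are nonnegative, and
`α ∂ₜ(k̃ * (f - f₀))(t) - ∂ₜ(k̃ * (h ∘ f - h f₀))(t) = A k̃(t) - ∫₀ᵗ k̃'(t - τ) B(τ) dτ`,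
which is `≥ 0` because `k̃ ≥ 0` and, `k̃` being nonincreasing, `k̃' ≤ 0` a.e.
-/

open MeasureTheory Set Filter

theorem ConvexOn.add_mul_sub_le_of_hasDerivAt {S : Set ℝ} {f : ℝ → ℝ} {f' x y : ℝ}
    (hf : ConvexOn ℝ S f) (hx : x ∈ S) (hy : y ∈ S) (hd : HasDerivAt f f' x) :
    f x + f' * (y - x) ≤ f y := by
  rcases lt_trichotomy x y with hxy | rfl | hyx
  · have := hf.le_slope_of_hasDerivAt hx hy hxy hd
    rw [slope_def_field, le_div_iff₀ (sub_pos.2 hxy)] at this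
    linarith
  · simp
  · have := hf.slope_le_of_hasDerivAt hy hx hyx hd
    rw [slope_def_field, div_le_iff₀ (sub_pos.2 hyx)] at this
    linarith

theorem AntitoneOn.ae_nonpos_of_eq_add_integral {k K : ℝ → ℝ} {a b : ℝ}
    (hk : AntitoneOn k (Icc a b)) (hK : IntervalIntegrable K volume a b)
    (hkK : ∀ x ∈ Icc a b, k x = k a + ∫ t in a..x, K t) :
    ∀ᵐ x, x ∈ Ioo a b → K x ≤ 0 := by
  filter_upwards [hK.ae_hasDerivAt_integral] with x hx hxab
  have hab : a ≤ b := hxab.1.le.trans hxab.2.le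
  have hd : HasDerivAt k (K x) x := by
    refine ((hx (by simp [uIcc_of_le hab, Ioo_subset_Icc_self hxab]) a
      (by simp)).const_add (k a)).congr_of_eventuallyEq ?_
    filter_upwards [Icc_mem_nhds hxab.1 hxab.2] with y hy using hkK y hy
  refine hd.hasDerivWithinAt.nonpos_of_antitoneOn ?_ hk
  rw [AccPt, inf_of_le_left (le_principal_iff.2
    (mem_nhdsWithin_of_mem_nhds (Icc_mem_nhds hxab.1 hxab.2)))]
  infer_instance

theorem intervalIntegral_integral_swap_triangle {E : Type*} [NormedAddCommGroup E]
    [NormedSpace ℝ E] {f : ℝ → ℝ → E} {a b : ℝ} (hab : a ≤ b)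
    (hf : IntegrableOn (Function.uncurry f) {p : ℝ × ℝ | a < p.2 ∧ p.2 < p.1 ∧ p.1 ≤ b}) :
    ∫ x in a..b, ∫ y in a..x, f x y = ∫ y in a..b, ∫ x in y..b, f x y := by
  set D := {p : ℝ × ℝ | a < p.2 ∧ p.2 < p.1 ∧ p.1 ≤ b}
  have hD : MeasurableSet D := by measurability
  have hF : Integrable (Function.uncurry fun x y => D.indicator (Function.uncurry f) (x, y))
      (volume.prod volume) := (integrable_indicator_iff hD).2 hf
  have hrows (x : ℝ) : ∫ y, D.indicator (Function.uncurry f) (x, y) =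
      (Ioc a b).indicator (fun x => ∫ y in Ioo a x, f x y) x := by
    by_cases hx : x ∈ Ioc a b
    · rw [indicator_of_mem hx, ← integral_indicator measurableSet_Ioo]
      congr 1 with y
      by_cases hy : y ∈ Ioo a x <;> simp_all [D, indicator]
    · rw [indicator_of_notMem hx, ← integral_zero ℝ E]
      congr 1 with y
      exact indicator_of_notMem (fun hp => hx ⟨hp.1.trans hp.2.1, hp.2.2⟩) _
  have hcols (y : ℝ) : ∫ x, D.indicator (Function.uncurry f) (x, y) =
      (Ioc a b).indicator (fun y => ∫ x in Ioc y b, f x y) y := by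
    by_cases hy : y ∈ Ioc a b
    · rw [indicator_of_mem hy, ← integral_indicator measurableSet_Ioc]
      congr 1 with x
      by_cases hx : x ∈ Ioc y b <;> simp_all [D, indicator]
    · rw [indicator_of_notMem hy, ← integral_zero ℝ E]
      congr 1 with x
      exact indicator_of_notMem (fun hp => hy ⟨hp.1, hp.2.1.le.trans hp.2.2⟩) _
  have hswap := integral_integral_swap hF
  simp only [hrows, hcols, integral_indicator measurableSet_Ioc] at hswap
  rw [intervalIntegral.integral_of_le hab, intervalIntegral.integral_of_le hab]
  convert hswap using 1
  · refine setIntegral_congr_fun measurableSet_Ioc fun x hx => ?_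
    rw [intervalIntegral.integral_of_le hx.1.le, integral_Ioc_eq_integral_Ioo]
  · refine setIntegral_congr_fun measurableSet_Ioc fun y hy => ?_
    rw [intervalIntegral.integral_of_le hy.2]

noncomputable def truncConv (w₁ w₂ : ℝ → ℝ) (t : ℝ) : ℝ := ∫ τ in (0:ℝ)..t, w₁ (t - τ) * w₂ τ

section TruncConv

variable {K g : ℝ → ℝ} {u : ℝ}

/- Extending `K` by zero outside `[0, u)` and `g` outside `(0, u]` turns the truncated convolution
on `[0, u]` into a convolution on `ℝ`, to which `Integrable.convolution_integrand` applies. -/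
theorem indicator_sub_mul_indicator_eq {s : ℝ} (hsu : s ≤ u) (τ : ℝ) :
    (Ico 0 u).indicator K (s - τ) * (Ioc 0 u).indicator g τ =
      (Ioc 0 s).indicator (fun τ => K (s - τ) * g τ) τ := by
  by_cases hτ : τ ∈ Ioc 0 s
  · rw [indicator_of_mem hτ, indicator_of_mem (by grind), indicator_of_mem (by grind)]
  · rw [indicator_of_notMem hτ]
    by_cases hτ' : τ ∈ Ioc 0 u
    · rw [indicator_of_notMem (by grind), zero_mul]
    · rw [indicator_of_notMem hτ', mul_zero]

theorem truncConv_eq_integral_indicator {s : ℝ} (hs : 0 ≤ s) (hsu : s ≤ u) :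
    truncConv K g s = ∫ τ, (Ico 0 u).indicator K (s - τ) * (Ioc 0 u).indicator g τ := by
  simp only [truncConv, indicator_sub_mul_indicator_eq hsu,
    integral_indicator measurableSet_Ioc, intervalIntegral.integral_of_le hs]

theorem integrable_indicator_sub_mul_indicator (hK : IntervalIntegrable K volume 0 u)
    (hg : IntervalIntegrable g volume 0 u) :
    Integrable (fun p : ℝ × ℝ => (Ico 0 u).indicator K (p.1 - p.2) * (Ioc 0 u).indicator g p.2)
      (volume.prod volume) := by
  rcases le_total 0 u with hu | hu
  · have hK' : Integrable ((Ico 0 u).indicator K) := by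
      rw [integrable_indicator_iff measurableSet_Ico, ← integrableOn_Icc_iff_integrableOn_Ico,
        integrableOn_Icc_iff_integrableOn_Ioc, ← intervalIntegrable_iff_integrableOn_Ioc_of_le hu]
      exact hK
    have hg' : Integrable ((Ioc 0 u).indicator g) := by
      rwa [integrable_indicator_iff measurableSet_Ioc,
        ← intervalIntegrable_iff_integrableOn_Ioc_of_le hu]
    simpa [mul_comm] using hg'.convolution_integrand (ContinuousLinearMap.mul ℝ ℝ).flip hK'
  · simp [Ico_eq_empty_of_le hu, Ioc_eq_empty_of_le hu]

theorem IntervalIntegrable.truncConv (hu : 0 ≤ u) (hK : IntervalIntegrable K volume 0 u)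
    (hg : IntervalIntegrable g volume 0 u) :
    IntervalIntegrable (truncConv K g) volume 0 u := by
  rw [intervalIntegrable_iff_integrableOn_Ioc_of_le hu]
  refine (integrable_indicator_sub_mul_indicator hK hg).integral_prod_left.integrableOn.congr_fun
    (fun s hs => ?_) measurableSet_Ioc
  exact (truncConv_eq_integral_indicator hs.1.le hs.2).symm

theorem integrableOn_triangle_sub_mul (hK : IntervalIntegrable K volume 0 u)
    (hg : IntervalIntegrable g volume 0 u) :
    IntegrableOn (Function.uncurry fun s τ => K (s - τ) * g τ)
      {p : ℝ × ℝ | 0 < p.2 ∧ p.2 < p.1 ∧ p.1 ≤ u} := by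
  refine (integrable_indicator_sub_mul_indicator hK hg).integrableOn.congr_fun
    (fun p hp => ?_) (by measurability)
  dsimp only [Function.uncurry]
  rw [indicator_sub_mul_indicator_eq hp.2.2,
    indicator_of_mem (show p.2 ∈ Ioc 0 p.1 from ⟨hp.1, hp.2.1.le⟩)]

theorem truncConv_eq_integral_of_eq_add_integral {k : ℝ → ℝ} (hu : 0 ≤ u)
    (hK : IntervalIntegrable K volume 0 u) (hkK : ∀ v ∈ Icc 0 u, k v = k 0 + ∫ σ in 0..v, K σ)
    (hg : IntervalIntegrable g volume 0 u) :
    truncConv k g u = ∫ s in 0..u, (k 0 * g s + truncConv K g s) := by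
  have hk : ContinuousOn k (Icc 0 u) := by
    have hprim : ContinuousOn (fun v => ∫ σ in (0:ℝ)..v, K σ) (uIcc 0 u) :=
      intervalIntegral.continuousOn_primitive_interval
        (by rw [uIcc_of_le hu]; exact (intervalIntegrable_iff_integrableOn_Icc_of_le hu).1 hK)
    rw [uIcc_of_le hu] at hprim
    exact (hprim.const_add (k 0)).congr hkK
  have hkg : IntervalIntegrable (fun τ => k (u - τ) * g τ) volume 0 u := by
    rw [intervalIntegrable_iff_integrableOn_Icc_of_le hu] at hg ⊢
    exact hg.continuousOn_mul (hk.comp (continuousOn_const.sub continuousOn_id)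
      (fun τ hτ => ⟨by linarith [hτ.2], by linarith [hτ.1]⟩)) isCompact_Icc
  have hshift : ∀ τ ∈ uIcc 0 u, k (u - τ) * g τ - k 0 * g τ = ∫ s in τ..u, K (s - τ) * g τ := by
    intro τ hτ
    rw [uIcc_of_le hu] at hτ
    rw [intervalIntegral.integral_mul_const, intervalIntegral.integral_comp_sub_right, sub_self,
      hkK (u - τ) ⟨by linarith [hτ.2], by linarith [hτ.1]⟩]
    ring
  have hswap := intervalIntegral_integral_swap_triangle hu (integrableOn_triangle_sub_mul hK hg)
  have key : truncConv k g u - k 0 * ∫ s in 0..u, g s = ∫ s in 0..u, truncConv K g s := by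
    rw [← intervalIntegral.integral_const_mul, truncConv, ← intervalIntegral.integral_sub hkg
      (hg.const_mul _), intervalIntegral.integral_congr hshift, ← hswap]
    rfl
  rw [intervalIntegral.integral_add (hg.const_mul _) (hK.truncConv hu hg),
    intervalIntegral.integral_const_mul]
  linarith

theorem ae_hasDerivAt_truncConv {k : ℝ → ℝ} {T : ℝ} (hT : 0 ≤ T)
    (hK : IntervalIntegrable K volume 0 T) (hkK : ∀ v ∈ Icc 0 T, k v = k 0 + ∫ σ in 0..v, K σ)
    (hg : IntervalIntegrable g volume 0 T) :
    ∀ᵐ t, t ∈ Ioo 0 T → HasDerivAt (truncConv k g) (k 0 * g t + truncConv K g t) t := by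
  filter_upwards [((hg.const_mul (k 0)).add (hK.truncConv hT hg)).ae_hasDerivAt_integral]
    with t ht htT
  refine (ht (by simp [uIcc_of_le hT, Ioo_subset_Icc_self htT]) 0
    (by simp)).congr_of_eventuallyEq ?_
  filter_upwards [Icc_mem_nhds htT.1 htT.2] with v hv
  have hsub : uIcc 0 v ⊆ uIcc 0 T := uIcc_subset_uIcc_left (by rwa [uIcc_of_le hT])
  exact truncConv_eq_integral_of_eq_add_integral hv.1 (hK.mono_set hsub)
    (fun w hw => hkK w ⟨hw.1, hw.2.trans hv.2⟩) (hg.mono_set hsub)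

end TruncConv

theorem Continuous.memLp_top_comp {α E F : Type*} [MeasurableSpace α] {μ : Measure α}
    [NormedAddCommGroup E] [ProperSpace E] [NormedAddCommGroup F] {φ : E → F} {f : α → E}
    (hφ : Continuous φ) (hf : MemLp f ⊤ μ) : MemLp (fun x => φ (f x)) ⊤ μ := by
  obtain ⟨M, hM⟩ := (isCompact_closedBall (0 : E) (lpNorm f ⊤ μ)).exists_bound_of_continuousOn
    hφ.continuousOn
  refine memLp_top_of_bound (hφ.comp_aestronglyMeasurable hf.1) M ?_
  filter_upwards [ae_le_lpNorm_exponent_top hf] with x hx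
  exact hM _ (mem_closedBall_zero_iff.2 hx)

theorem intervalIntegrable_sub_mul_of_memLp_top {K φ : ℝ → ℝ} {t : ℝ} (ht : 0 ≤ t)
    (hK : IntervalIntegrable K volume 0 t) (hφ : MemLp φ ⊤ (volume.restrict (Ioc 0 t))) :
    IntervalIntegrable (fun τ => K (t - τ) * φ τ) volume 0 t := by
  have hK' : IntervalIntegrable (fun τ => K (t - τ)) volume 0 t := by
    simpa using (hK.comp_sub_left t).symm
  rw [intervalIntegrable_iff_integrableOn_Ioc_of_le ht] at hK' ⊢
  exact hK'.mul_of_top_left hφ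

theorem integral_sub_mul_nonpos {K B : ℝ → ℝ} {t : ℝ} (ht : 0 ≤ t)
    (hK : ∀ᵐ σ, σ ∈ Ioc 0 t → K σ ≤ 0) (hB : ∀ τ, 0 ≤ B τ) :
    ∫ τ in 0..t, K (t - τ) * B τ ≤ 0 := by
  have := intervalIntegral.integral_comp_sub_left (fun σ => K σ * B (t - σ)) (a := 0) (b := t) t
  simp only [sub_sub_cancel, sub_self, sub_zero] at this
  rw [this, intervalIntegral.integral_of_le ht]
  refine integral_nonpos_of_ae ?_
  filter_upwards [(ae_restrict_iff' measurableSet_Ioc).2 hK] with σ hσ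
  exact mul_nonpos_of_nonpos_of_nonneg hσ (hB _)

theorem ConvexOn.truncConv_comp_le {h K f : ℝ → ℝ} {c t α f₀ : ℝ}
    (hconv : ConvexOn ℝ univ h) (hd : HasDerivAt h α (f t)) (ht : 0 ≤ t)
    (hK : IntervalIntegrable K volume 0 t) (hK_nonpos : ∀ᵐ σ, σ ∈ Ioc 0 t → K σ ≤ 0)
    (hc : 0 ≤ c + ∫ σ in 0..t, K σ) (hf : MemLp f ⊤ (volume.restrict (Ioc 0 t)))
    (hhf : MemLp (fun τ => h (f τ)) ⊤ (volume.restrict (Ioc 0 t))) :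
    c * (h (f t) - h f₀) + truncConv K (fun τ => h (f τ) - h f₀) t ≤
      α * (c * (f t - f₀) + truncConv K (fun τ => f τ - f₀) t) := by
  set a := f t
  set A := α * (a - f₀) - (h a - h f₀) with hA_def
  set B := fun τ => h (f τ) - h a - α * (f τ - a)
  have hA : 0 ≤ A := by
    have := hconv.add_mul_sub_le_of_hasDerivAt (mem_univ a) (mem_univ f₀) hd
    linarith
  have hB τ : 0 ≤ B τ := by
    have := hconv.add_mul_sub_le_of_hasDerivAt (mem_univ a) (mem_univ (f τ)) hd
    simp only [B]
    linarith
  have hint {φ : ℝ → ℝ} (hφ : MemLp φ ⊤ (volume.restrict (Ioc 0 t))) :=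
    intervalIntegrable_sub_mul_of_memLp_top ht hK hφ
  have hsplit : α * truncConv K (fun τ => f τ - f₀) t - truncConv K (fun τ => h (f τ) - h f₀) t =
      (∫ σ in 0..t, K σ) * A - ∫ τ in 0..t, K (t - τ) * B τ := by
    have hKrev : ∫ σ in 0..t, K σ = ∫ τ in 0..t, K (t - τ) := by
      simp [intervalIntegral.integral_comp_sub_left]
    have hfg := hint (φ := fun τ => f τ - f₀) (hf.sub (memLp_top_const f₀))
    have hhfg := hint (φ := fun τ => h (f τ) - h f₀) (hhf.sub (memLp_top_const _))
    have hKA := hint (φ := fun _ => A) (memLp_top_const A)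
    have hKB := hint (φ := B) ((hhf.sub (memLp_top_const _)).sub
      ((hf.sub (memLp_top_const a)).const_mul α))
    rw [hKrev, truncConv, truncConv, ← intervalIntegral.integral_const_mul,
      ← intervalIntegral.integral_mul_const,
      ← intervalIntegral.integral_sub (hfg.const_mul α) hhfg,
      ← intervalIntegral.integral_sub hKA hKB]
    congr 1 with τ
    ring
  linear_combination
    -hsplit + mul_nonneg hA hc + integral_sub_mul_nonpos ht hK_nonpos hB + c * hA_def

theorem chain_rule_inequality_H1_kernel_general
    (T : ℝ) (hT : 0 < T)
    (ktil k' : ℝ → ℝ)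
    (hknn : ∀ t ∈ Set.Icc (0:ℝ) T, 0 ≤ ktil t)
    (hkmono : AntitoneOn ktil (Set.Icc (0:ℝ) T))
    (hk' : MemLp k' 2 (volume.restrict (Set.Ioo 0 T)))
    (hkAC : ∀ t ∈ Set.Icc (0:ℝ) T, ktil t = ktil 0 + ∫ s in (0:ℝ)..t, k' s)
    (h h' : ℝ → ℝ) (hconv : ConvexOn ℝ Set.univ h)
    (hderiv : ∀ x : ℝ, HasDerivAt h (h' x) x)
    (f : ℝ → ℝ) (hf : MemLp f ⊤ (volume.restrict (Set.Ioo 0 T)))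
    (f₀ : ℝ) :
    ∀ᵐ t ∂(volume.restrict (Set.Ioo 0 T)), ∃ D₁ D₂ : ℝ,
      HasDerivAt (fun s => ∫ τ in (0:ℝ)..s, ktil (s - τ) * (f τ - f₀)) D₁ t ∧
      HasDerivAt (fun s => ∫ τ in (0:ℝ)..s, ktil (s - τ) * (h (f τ) - h f₀)) D₂ t ∧
      D₂ ≤ h' (f t) * D₁ := by
  have hhf : MemLp (fun τ => h (f τ)) ⊤ (volume.restrict (Ioo 0 T)) :=
    (continuous_iff_continuousAt.2 fun x => (hderiv x).continuousAt).memLp_top_comp hf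
  have hIoo {φ : ℝ → ℝ} {p : ENNReal} (hp : 1 ≤ p) (hφ : MemLp φ p (volume.restrict (Ioo 0 T))) :
      IntervalIntegrable φ volume 0 T :=
    (intervalIntegrable_iff_integrableOn_Ioo_of_le hT.le).2 (hφ.integrable hp)
  have hK := hIoo one_le_two hk'
  have hK_nonpos := hkmono.ae_nonpos_of_eq_add_integral hK hkAC
  filter_upwards [ae_restrict_of_ae (ae_hasDerivAt_truncConv hT.le hK hkAC
      (hIoo le_top (hf.sub (memLp_top_const f₀)))),
    ae_restrict_of_ae (ae_hasDerivAt_truncConv hT.le hK hkAC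
      (hIoo le_top (hhf.sub (memLp_top_const (h f₀))))),
    ae_restrict_mem measurableSet_Ioo] with t hd₁ hd₂ ht
  have hsub : Ioc 0 t ⊆ Ioo 0 T := Ioc_subset_Ioo_right ht.2
  refine ⟨_, _, hd₁ ht, hd₂ ht, hconv.truncConv_comp_le (hderiv _) ht.1.le
    (hK.mono_set (uIcc_subset_uIcc_left (by rw [uIcc_of_le hT.le]; exact Ioo_subset_Icc_self ht)))
    ?_ ?_ (hf.mono_measure (Measure.restrict_mono hsub le_rfl))
    (hhf.mono_measure (Measure.restrict_mono hsub le_rfl))⟩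
  · filter_upwards [hK_nonpos] with σ hσ hσt using hσ (hsub hσt)
  · rw [← hkAC t (Ioo_subset_Icc_self ht)]
    exact hknn t (Ioo_subset_Icc_self ht)

/-- Chain rule inequality for Caputo-type derivatives with `H¹` kernels: if
`k̃ ∈ H¹([0,T])` is nonnegative and nonincreasing, `h` is convex and `C¹`, and
`f ∈ L^∞((0,T))`, then for a.e. `t ∈ (0,T)`,
`∂_t[k̃*(h(f) - h(f₀))](t) ≤ h'(f(t)) ∂_t[k̃*(f - f₀)](t)`. -/
theorem chain_rule_inequality_H1_kernel
    (T : ℝ) (hT : 0 < T)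
    (ktil k' : ℝ → ℝ)
    (hknn : ∀ t ∈ Set.Icc (0:ℝ) T, 0 ≤ ktil t)
    (hkmono : AntitoneOn ktil (Set.Icc (0:ℝ) T))
    (hk' : MemLp k' 2 (volume.restrict (Set.Ioo 0 T)))
    (hkAC : ∀ t ∈ Set.Icc (0:ℝ) T, ktil t = ktil 0 + ∫ s in (0:ℝ)..t, k' s)
    (h h' : ℝ → ℝ) (hconv : ConvexOn ℝ Set.univ h)
    (hderiv : ∀ x : ℝ, HasDerivAt h (h' x) x) (hcont : Continuous h')
    (f : ℝ → ℝ) (hf : MemLp f ⊤ (volume.restrict (Set.Ioo 0 T)))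
    (f₀ : ℝ) :
    ∀ᵐ t ∂(volume.restrict (Set.Ioo 0 T)), ∃ D₁ D₂ : ℝ,
      HasDerivAt (fun s => ∫ τ in (0:ℝ)..s, ktil (s - τ) * (f τ - f₀)) D₁ t ∧
      HasDerivAt (fun s => ∫ τ in (0:ℝ)..s, ktil (s - τ) * (h (f τ) - h f₀)) D₂ t ∧
      D₂ ≤ h' (f t) * D₁ :=
  chain_rule_inequality_H1_kernel_general T hT ktil k' hknn hkmono hk' hkAC h h' hconv hderiv f hf
    f₀
end
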